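/- Let e1, e2 ∈ {0, 1, …, N−1}. For every even shift τ = 2τ0 with τ0 an integer, the periodic cross-correlation of the interleaved sequences satisfies R_{S^{e1},S^{e2}}(2τ0) = R_{T^(1)}(τ0) + R_{T^(1)}(e2 − e1 + τ0), where R_{T^(1)} is extended N-periodically to all integer arguments. -/

import Mathlib

/-- The geometric sequence of the first type: `t¹ₙ = 1` iff the Legendre symbol of
`Tr(ω^n)` is `-1`, and `0` otherwise (i.e. when the symbol is `0` or `1`). -/
noncomputable def ntuT1 (p : ℕ) [Fact p.Prime] {F : Type} [Field F]
    [Algebra (ZMod p) F] (ω : F) (n : ℕ) : ZMod 2 :=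
  if legendreSym p ((Algebra.trace (ZMod p) F (ω ^ n)).val : ℤ) = -1 then 1 else 0

/-- The geometric sequence of the second type: `t²ₙ = 0` iff the Legendre symbol of
`Tr(ω^n)` is `1`, and `1` otherwise (i.e. when the symbol is `0` or `-1`). -/
noncomputable def ntuT2 (p : ℕ) [Fact p.Prime] {F : Type} [Field F]
    [Algebra (ZMod p) F] (ω : F) (n : ℕ) : ZMod 2 :=
  if legendreSym p ((Algebra.trace (ZMod p) F (ω ^ n)).val : ℤ) = 1 then 0 else 1

/-- Periodic cross-correlation at shift `τ` of two `N`-periodic binary sequences: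
`R_{s,s'}(τ) = Σ_{i=0}^{N-1} (-1)^{s_i + s'_{i+τ}}`, indices taken modulo `N`. -/
def pcorr (N : ℕ) (s s' : ℕ → ZMod 2) (τ : ℤ) : ℤ :=
  ∑ i ∈ Finset.range N, (-1 : ℤ) ^ ((s i + s' ((((i : ℤ) + τ) % (N : ℤ)).toNat)).val)

/-- The interleaved sequence of `t` and the left shift by `e` of `u`:
`n = 2j ↦ t j`, `n = 2j+1 ↦ u (j + e)`. -/
def ntuInterleave (t u : ℕ → ZMod 2) (e : ℕ) (n : ℕ) : ZMod 2 :=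
  if n % 2 = 0 then t (n / 2) else u (n / 2 + e)


/-! Put `k = (p^m - 1)/(p - 1)`, so that `N = 2k`. The element `ω^k` has order `p - 1`, so it lies
in `𝔽_p` and generates `𝔽_p^×`; in particular it is a nonsquare. As the trace is `𝔽_p`-linear,
`χ(Tr(ω^(n+k))) = -χ(Tr(ω^n))`, which gives `t²ₙ = t¹ₙ₊ₖ + 1` and makes `T¹` `N`-periodic.
At an even shift the correlation of two interleaved sequences splits into the even positions,
giving `R_{T¹}(τ₀)`, and the odd positions, giving the correlation of the shifts of `T²` by `e₁`
and `e₂`. Complementing both sequences does not change a correlation, and the shifts by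
`e₁ + k` and `e₂ + k` of the periodic `T¹` correlate like `T¹` itself at `τ₀ + e₂ - e₁`. -/

open Finset Function

theorem Finset.sum_range_two_mul {M : Type*} [AddCommMonoid M] (f : ℕ → M) (n : ℕ) :
    ∑ i ∈ range (2 * n), f i = ∑ j ∈ range n, f (2 * j) + ∑ j ∈ range n, f (2 * j + 1) := by
  induction n with
  | zero => simp
  | succ n ih =>
    rw [show 2 * (n + 1) = 2 * n + 1 + 1 by ring, sum_range_succ, sum_range_succ, ih,
      sum_range_succ, sum_range_succ]
    abel

theorem Function.Periodic.sum_range_comp_add {M : Type*} [AddCommMonoid M] {f : ℕ → M} {N : ℕ}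
    (hf : Periodic f N) (c : ℕ) : ∑ i ∈ range N, f (i + c) = ∑ i ∈ range N, f i := by
  induction c with
  | zero => simp
  | succ c ih =>
    rw [← ih]
    obtain _ | n := N
    · simp
    have hwrap : f (n + c + 1) = f c := by rw [add_right_comm, add_comm]; exact hf c
    rw [sum_range_succ, sum_range_succ' (fun i => f (i + c))]
    simp only [← add_assoc, add_right_comm _ 1 c, zero_add, hwrap]

theorem Function.Periodic.apply_toNat_emod {α : Type*} {s : ℕ → α} {N : ℕ} (hs : Periodic s N)
    {z : ℤ} {n : ℕ} (h : z ≡ n [ZMOD N]) : s ((z % N).toNat) = s n := by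
  rw [h, ← Int.natCast_mod, Int.toNat_natCast, hs.map_mod_nat]

theorem Int.two_mul_add_emod_two_mul {N : ℤ} (hN : 0 < N) (x : ℤ) {r : ℤ} (hr₀ : 0 ≤ r)
    (hr₁ : r < 2) : (2 * x + r) % (2 * N) = 2 * (x % N) + r := by
  have h₀ := Int.emod_nonneg x hN.ne'
  have h₁ := Int.emod_lt_of_pos x hN
  conv_lhs => rw [← Int.emod_add_mul_ediv x N]
  rw [show 2 * (x % N + N * (x / N)) + r = 2 * (x % N) + r + 2 * N * (x / N) by ring,
    Int.add_mul_emod_self_left, Int.emod_eq_of_lt (by omega) (by omega)]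

theorem ntuInterleave_two_mul (t u : ℕ → ZMod 2) (e j : ℕ) :
    ntuInterleave t u e (2 * j) = t j := by
  simp [ntuInterleave]

theorem ntuInterleave_two_mul_add_one (t u : ℕ → ZMod 2) (e j : ℕ) :
    ntuInterleave t u e (2 * j + 1) = u (j + e) := by
  simp [ntuInterleave, Nat.add_div]

theorem pcorr_ntuInterleave (t u : ℕ → ZMod 2) (N e₁ e₂ : ℕ) (τ : ℤ) :
    pcorr (2 * N) (ntuInterleave t u e₁) (ntuInterleave t u e₂) (2 * τ)
      = pcorr N t t τ + pcorr N (fun n => u (n + e₁)) (fun n => u (n + e₂)) τ := by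
  rcases N.eq_zero_or_pos with rfl | hN
  · simp [pcorr]
  have hidx : ∀ j r : ℕ, r < 2 → ((((2 * j + r : ℕ) : ℤ) + 2 * τ) % ((2 * N : ℕ) : ℤ)).toNat
      = 2 * (((j : ℤ) + τ) % N).toNat + r := by
    intro j r hr
    have h₀ := Int.emod_nonneg ((j : ℤ) + τ) (by omega : (N : ℤ) ≠ 0)
    rw [show (((2 * j + r : ℕ) : ℤ) + 2 * τ) = 2 * ((j : ℤ) + τ) + r by push_cast; ring,
      Nat.cast_mul, Nat.cast_ofNat, Int.two_mul_add_emod_two_mul (by omega) _ (by omega)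
        (by omega)]
    omega
  rw [pcorr, sum_range_two_mul]
  congr 1 <;> refine sum_congr rfl fun j _ => ?_
  · rw [← add_zero (2 * j), hidx j 0 (by norm_num), add_zero, add_zero,
      ntuInterleave_two_mul, ntuInterleave_two_mul]
  · rw [hidx j 1 (by norm_num), ntuInterleave_two_mul_add_one, ntuInterleave_two_mul_add_one]

theorem pcorr_congr_add_one {N : ℕ} {s s' u u' : ℕ → ZMod 2} (hu : ∀ n, u n = s n + 1)
    (hu' : ∀ n, u' n = s' n + 1) (τ : ℤ) : pcorr N u u' τ = pcorr N s s' τ := by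
  have hcancel : ∀ a b : ZMod 2, a + 1 + (b + 1) = a + b := by decide
  simp only [pcorr, hu, hu', hcancel]

theorem pcorr_comp_add {N : ℕ} {s : ℕ → ZMod 2} (hs : Periodic s N) (a b : ℕ) (τ : ℤ) :
    pcorr N (fun n => s (n + a)) (fun n => s (n + b)) τ = pcorr N s s (b - a + τ) := by
  set h : ℕ → ℤ := fun j => (-1) ^ (s j + s ((((j : ℤ) + (b - a + τ)) % N).toNat)).val
  have hh : Periodic h N := fun j => by
    simp only [h, hs j, Nat.cast_add, add_right_comm (j : ℤ) N, Int.add_emod_right]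
  rw [pcorr, pcorr, ← hh.sum_range_comp_add a]
  refine sum_congr rfl fun i hi => ?_
  have h₀ := Int.emod_nonneg ((i : ℤ) + τ) (by simp at hi; omega : (N : ℤ) ≠ 0)
  have hmod : ((i + a : ℕ) : ℤ) + (b - a + τ) ≡ ((((i : ℤ) + τ) % N).toNat + b : ℕ) [ZMOD N] := by
    push_cast
    rw [Int.toNat_of_nonneg h₀]
    calc ((i : ℤ) + a + (b - a + τ)) = (i + τ) + b := by ring
      _ ≡ (i + τ) % N + b [ZMOD N] := ((Int.mod_modEq _ _).symm).add_right _
  simp only [h, hs.apply_toNat_emod hmod]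

theorem pcorr_ntuInterleave_of_eq_add_one {N k : ℕ} {t u : ℕ → ZMod 2} (ht : Periodic t N)
    (hu : ∀ n, u n = t (n + k) + 1) (e₁ e₂ : ℕ) (τ : ℤ) :
    pcorr (2 * N) (ntuInterleave t u e₁) (ntuInterleave t u e₂) (2 * τ)
      = pcorr N t t τ + pcorr N t t ((e₂ : ℤ) - e₁ + τ) := by
  rw [pcorr_ntuInterleave]
  congr 1
  calc pcorr N (fun n => u (n + e₁)) (fun n => u (n + e₂)) τ
      = pcorr N (fun n => t (n + (e₁ + k))) (fun n => t (n + (e₂ + k))) τ :=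
        pcorr_congr_add_one (fun n => by rw [hu, add_assoc]) (fun n => by rw [hu, add_assoc]) τ
    _ = pcorr N t t (((e₂ + k : ℕ) : ℤ) - (e₁ + k : ℕ) + τ) := pcorr_comp_add ht _ _ τ
    _ = pcorr N t t ((e₂ : ℤ) - e₁ + τ) := by push_cast; ring_nf

theorem quadraticChar_eq_neg_one_of_orderOf_eq {K : Type*} [Field K] [Fintype K] [DecidableEq K]
    (hK : ringChar K ≠ 2) {g : K} (hg : orderOf g = Fintype.card K - 1) :
    quadraticChar K g = -1 := by
  have hodd := FiniteField.odd_card_of_char_ne_two hK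
  have hcard := Fintype.one_lt_card (α := K)
  have hg₀ : g ≠ 0 := by
    rintro rfl
    simp at hg
    omega
  rw [quadraticChar_neg_one_iff_not_isSquare, FiniteField.isSquare_iff hK hg₀]
  intro hpow
  have := Nat.le_of_dvd (by omega) (hg ▸ orderOf_dvd_of_pow_eq_one hpow)
  omega

theorem quadraticChar_trace_mul_of_orderOf_eq {p : ℕ} [Fact p.Prime] (hp2 : p ≠ 2)
    {F : Type*} [Field F] [Algebra (ZMod p) F] {x : F} (hx : orderOf x = p - 1) (y : F) :
    quadraticChar (ZMod p) (Algebra.trace (ZMod p) F (x * y))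
      = -quadraticChar (ZMod p) (Algebra.trace (ZMod p) F y) := by
  have : CharP F p := charP_of_injective_algebraMap' (ZMod p) p
  have hxp : x ^ p = x := by
    rw [← Nat.sub_add_cancel (Fact.out : p.Prime).one_le, pow_succ, ← hx, pow_orderOf_eq_one,
      one_mul]
  obtain ⟨n, rfl⟩ := (mem_bot_iff_intCast p F).1 ((Subfield.mem_bot_iff_pow_eq_self F p).2 hxp)
  have hg : orderOf (n : ZMod p) = p - 1 := by
    rw [← hx, ← map_intCast (algebraMap (ZMod p) F)]
    exact (orderOf_injective (algebraMap (ZMod p) F).toMonoidHom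
      (algebraMap (ZMod p) F).injective _).symm
  have hχ : quadraticChar (ZMod p) (n : ZMod p) = -1 :=
    quadraticChar_eq_neg_one_of_orderOf_eq (K := ZMod p) (by rwa [ZMod.ringChar_zmod_n])
      (by rwa [ZMod.card])
  rw [← map_intCast (algebraMap (ZMod p) F), ← Algebra.smul_def, map_smul, smul_eq_mul, map_mul,
    hχ, neg_one_mul]

section GeometricSequences

variable {p : ℕ} [Fact p.Prime] {F : Type} [Field F] [Algebra (ZMod p) F] {ω : F} {k : ℕ}

theorem legendreSym_val (x : ZMod p) : legendreSym p (x.val : ℤ) = quadraticChar (ZMod p) x := by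
  rw [legendreSym, Int.cast_natCast, ZMod.natCast_zmod_val]

theorem ntuT2_eq_ntuT1_add_one
    (hflip : ∀ n, quadraticChar (ZMod p) (Algebra.trace (ZMod p) F (ω ^ (n + k)))
      = -quadraticChar (ZMod p) (Algebra.trace (ZMod p) F (ω ^ n))) (n : ℕ) :
    ntuT2 p ω n = ntuT1 p ω (n + k) + 1 := by
  simp only [ntuT1, ntuT2, legendreSym_val, hflip, neg_eq_iff_eq_neg, neg_neg]
  split_ifs <;> decide

theorem ntuT1_periodic
    (hflip : ∀ n, quadraticChar (ZMod p) (Algebra.trace (ZMod p) F (ω ^ (n + k)))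
      = -quadraticChar (ZMod p) (Algebra.trace (ZMod p) F (ω ^ n))) :
    Periodic (ntuT1 p ω) (2 * k) := fun n => by
  simp only [ntuT1, legendreSym_val, two_mul, ← add_assoc, hflip, neg_neg]

end GeometricSequences

theorem stmt4_general (p m : ℕ) [Fact p.Prime] (hp2 : p ≠ 2)
    (F : Type) [Field F] [Algebra (ZMod p) F]
    (ω : F) (hω : orderOf ω = p ^ m - 1)
    (N : ℕ) (hN : N = 2 * (p ^ m - 1) / (p - 1)) (e1 e2 : ℕ) (τ0 : ℤ) :
    pcorr (2 * N) (ntuInterleave (ntuT1 p ω) (ntuT2 p ω) e1) (ntuInterleave (ntuT1 p ω) (ntuT2 p ω) e2) (2 * τ0)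
      = pcorr N (ntuT1 p ω) (ntuT1 p ω) τ0 + pcorr N (ntuT1 p ω) (ntuT1 p ω) ((e2 : ℤ) - (e1 : ℤ) + τ0) := by
  rcases eq_or_ne N 0 with rfl | hN₀
  · simp [pcorr]
  have hdvd : p - 1 ∣ orderOf ω := by simpa [hω] using Nat.sub_dvd_pow_sub_pow p 1 m
  have hω₀ : orderOf ω ≠ 0 := by
    intro h
    simp [← hω, h] at hN
    exact hN₀ hN
  set k := orderOf ω / (p - 1)
  have hNk : N = 2 * k := by rw [hN, ← hω, Nat.mul_div_assoc 2 hdvd]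
  have hflip (n : ℕ) : quadraticChar (ZMod p) (Algebra.trace (ZMod p) F (ω ^ (n + k)))
      = -quadraticChar (ZMod p) (Algebra.trace (ZMod p) F (ω ^ n)) := by
    rw [pow_add, mul_comm]
    exact quadraticChar_trace_mul_of_orderOf_eq hp2 (orderOf_pow_orderOf_div hω₀ hdvd) _
  rw [hNk]
  exact pcorr_ntuInterleave_of_eq_add_one (ntuT1_periodic hflip) (ntuT2_eq_ntuT1_add_one hflip)
    e1 e2 τ0

theorem stmt4 (p m : ℕ) [Fact p.Prime] (hp2 : p ≠ 2) (hm : 1 < m)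
    (F : Type) [Field F] [Fintype F] [Algebra (ZMod p) F]
    (hcard : Fintype.card F = p ^ m) (ω : F) (hω : orderOf ω = p ^ m - 1)
    (N : ℕ) (hN : N = 2 * (p ^ m - 1) / (p - 1)) (e1 e2 : ℕ) (he1 : e1 < N) (he2 : e2 < N) (τ0 : ℤ) :
    pcorr (2 * N) (ntuInterleave (ntuT1 p ω) (ntuT2 p ω) e1) (ntuInterleave (ntuT1 p ω) (ntuT2 p ω) e2) (2 * τ0)
      = pcorr N (ntuT1 p ω) (ntuT1 p ω) τ0 + pcorr N (ntuT1 p ω) (ntuT1 p ω) ((e2 : ℤ) - (e1 : ℤ) + τ0) :=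
  stmt4_general p m hp2 F ω hω N hN e1 e2 τ0
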